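/- Let (E,q) be a formed space and A, B, C ≤ E subspaces with A ∩ C = 0 = B ∩ C, and let f : A → B be a bijective isometry. (1) If C ≤ A^⊥ ∩ B^⊥, then the map f ⊕ id : A ⊕ C → B ⊕ C, a + c ↦ f(a) + c, is an isometry. (2) If A = span{a}, B = span{b} with f(a) = b, then the same conclusion holds under the weaker assumption that C ≤ (a−b)^⊥. -/

import Mathlib

def IsSesq {F E : Type*} [Field F] [AddCommGroup E] [Module F E]
    (σ : F →+* F) (q : E → E → F) : Prop :=
  (∀ v v' w : E, q (v + v') w = q v w + q v' w) ∧
  (∀ v w w' : E, q v (w + w') = q v w + q v w') ∧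
  ∀ (a b : F) (v w : E), q (a • v) (b • w) = σ a * q v w * b

def omegaF {F E : Type*} [Field F] [AddCommGroup E] [Module F E]
    (σ : F →+* F) (ε : F) (q : E → E → F) (v w : E) : F :=
  q v w + ε * σ (q w v)

def perpSet {F E : Type*} [Field F] [AddCommGroup E] [Module F E]
    (σ : F →+* F) (ε : F) (q : E → E → F) (S : Set E) : Set E :=
  {v : E | ∀ u ∈ S, omegaF σ ε q v u = 0}

/-
The map `f ⊕ id` moves `x + c` by the displacement `d = f x - x`. Expanding bi-additively, the
defect of `f ⊕ id` in `ω` is the defect of `f` plus the cross terms `ω(f x - x, c') + ω(c, f x' - x')`,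
and its defect in `q` is the defect of `f` plus `q(d, c) + q(c, d)`. If `c` is `ω`-orthogonal to `d`,
then `q(c, d) = -ε σ(q(d, c))`, so the latter is an element `q(d, c) - ε σ(q(d, c))` of `Λ_min`.
Hence it suffices that `C` is orthogonal to all displacements: in case (1) these lie in `A + B`,
in case (2) on the line through `a - b`.
-/

section FormedSpace

variable {F E : Type*} [Field F] [AddCommGroup E] [Module F E]
  {σ : F →+* F} {ε : F} {q : E → E → F}

namespace IsSesq

theorem sub_left (hq : IsSesq σ q) (v v' w : E) : q (v - v') w = q v w - q v' w :=
  map_sub (AddMonoidHom.mk' (q · w) fun v v' => hq.1 v v' w) v v'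

theorem sub_right (hq : IsSesq σ q) (v w w' : E) : q v (w - w') = q v w - q v w' :=
  map_sub (AddMonoidHom.mk' (q v) (hq.2.1 v)) w w'

theorem smul_left (hq : IsSesq σ q) (t : F) (v w : E) : q (t • v) w = σ t * q v w := by
  simpa using hq.2.2 t 1 v w

theorem smul_right (hq : IsSesq σ q) (t : F) (v w : E) : q v (t • w) = q v w * t := by
  simpa using hq.2.2 1 t v w

/-- `ω(c, ·)` as a linear form. -/
def omegaFₗ (hq : IsSesq σ q) (hσ : ∀ a : F, σ (σ a) = a) (ε : F) (c : E) : E →ₗ[F] F where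
  toFun := omegaF σ ε q c
  map_add' w w' := by
    simp only [omegaF, hq.2.1, hq.1, map_add]
    ring
  map_smul' t w := by
    simp only [omegaF, hq.smul_left, hq.smul_right, map_mul, hσ, smul_eq_mul, RingHom.id_apply]
    ring

end IsSesq

theorem omegaF_swap (hσ : ∀ a : F, σ (σ a) = a) (hε : ε * σ ε = 1) (v w : E) :
    omegaF σ ε q w v = ε * σ (omegaF σ ε q v w) := by
  simp only [omegaF, map_add, map_mul, hσ, mul_add, ← mul_assoc, hε, one_mul]
  ring

theorem omegaF_eq_zero_comm (hσ : ∀ a : F, σ (σ a) = a) (hε : ε * σ ε = 1) {v w : E}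
    (h : omegaF σ ε q v w = 0) : omegaF σ ε q w v = 0 := by
  rw [omegaF_swap hσ hε, h, map_zero, mul_zero]

theorem omegaF_add_add_eq (hq : IsSesq σ q) (hσ : ∀ a : F, σ (σ a) = a) (hε : ε * σ ε = 1)
    {x x' y y' c c' : E} (h : omegaF σ ε q y y' = omegaF σ ε q x x')
    (hc : omegaF σ ε q c (y' - x') = 0) (hc' : omegaF σ ε q c' (y - x) = 0) :
    omegaF σ ε q (y + c) (y' + c') = omegaF σ ε q (x + c) (x' + c') := by
  have hc'' := omegaF_eq_zero_comm hσ hε hc'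
  simp only [omegaF, hq.sub_left, hq.sub_right, map_sub] at h hc hc''
  simp only [omegaF, hq.1, hq.2.1, map_add]
  linear_combination h + hc + hc''

theorem q_add_add_sub_mem (hq : IsSesq σ q) {Λ : AddSubgroup F}
    (hmin : ∀ a : F, a - ε * σ a ∈ Λ) {x y c : E} (h : q y y - q x x ∈ Λ)
    (hc : omegaF σ ε q c (y - x) = 0) : q (y + c) (y + c) - q (x + c) (x + c) ∈ Λ := by
  have hcross : q (y + c) (y + c) - q (x + c) (x + c)
      = (q y y - q x x) + (q (y - x) c - ε * σ (q (y - x) c)) := by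
    simp only [omegaF, hq.sub_left, hq.sub_right, map_sub] at hc
    simp only [hq.1, hq.2.1, hq.sub_left, map_sub]
    linear_combination hc
  rw [hcross]
  exact Λ.add_mem h (hmin _)

theorem isometry_add_of_perp_displacement (hq : IsSesq σ q) (hσ : ∀ a : F, σ (σ a) = a)
    (hε : ε * σ ε = 1) {Λ : AddSubgroup F} (hmin : ∀ a : F, a - ε * σ a ∈ Λ)
    {A B C : Submodule F E} (f : A → B)
    (hfω : ∀ x x' : A, omegaF σ ε q (f x : E) (f x' : E) = omegaF σ ε q (x : E) (x' : E))
    (hfQ : ∀ x : A, q (f x : E) (f x : E) - q (x : E) (x : E) ∈ Λ)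
    (hC : ∀ (c : C) (x : A), omegaF σ ε q (c : E) ((f x : E) - x) = 0) (x x' : A) (c c' : C) :
    omegaF σ ε q ((f x : E) + c) ((f x' : E) + c')
        = omegaF σ ε q ((x : E) + c) ((x' : E) + c') ∧
      q ((f x : E) + c) ((f x : E) + c) - q ((x : E) + c) ((x : E) + c) ∈ Λ :=
  ⟨omegaF_add_add_eq hq hσ hε (hfω x x') (hC c x') (hC c' x),
    q_add_add_sub_mem hq hmin (hfQ x) (hC c x)⟩

end FormedSpace

theorem stmt13_general {F E : Type*} [Field F] [AddCommGroup E] [Module F E]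
    (σ : F →+* F) (hσ : ∀ a : F, σ (σ a) = a)
    (ε : F) (hε : ε * σ ε = 1)
    (Λ : AddSubgroup F)
    (hmin : ∀ a : F, a - ε * σ a ∈ Λ)
    (q : E → E → F) (hq : IsSesq σ q)
    (A B C : Submodule F E)
    (f : A →ₗ[F] B)
    (hfω : ∀ x x' : A, omegaF σ ε q (f x : E) (f x' : E) = omegaF σ ε q (x : E) (x' : E))
    (hfQ : ∀ x : A, q (f x : E) (f x : E) - q (x : E) (x : E) ∈ Λ) :
    (((C : Set E) ⊆ perpSet σ ε q (A : Set E) ∩ perpSet σ ε q (B : Set E)) →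
      ∀ (x x' : A) (c c' : C),
        omegaF σ ε q ((f x : E) + c) ((f x' : E) + c')
          = omegaF σ ε q ((x : E) + c) ((x' : E) + c') ∧
        q ((f x : E) + c) ((f x : E) + c) - q ((x : E) + c) ((x : E) + c) ∈ Λ) ∧
    (∀ (a b : E) (ha : a ∈ A), A = Submodule.span F {a} → B = Submodule.span F {b} →
      (f ⟨a, ha⟩ : E) = b → (C : Set E) ⊆ perpSet σ ε q {a - b} →
      ∀ (x x' : A) (c c' : C),
        omegaF σ ε q ((f x : E) + c) ((f x' : E) + c')
          = omegaF σ ε q ((x : E) + c) ((x' : E) + c') ∧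
        q ((f x : E) + c) ((f x : E) + c) - q ((x : E) + c) ((x : E) + c) ∈ Λ) := by
  refine ⟨fun hC => isometry_add_of_perp_displacement hq hσ hε hmin f hfω hfQ ?_,
    fun a b ha hA _ hfab hC => isometry_add_of_perp_displacement hq hσ hε hmin f hfω hfQ ?_⟩
  · intro c x
    show (f x : E) - x ∈ LinearMap.ker (hq.omegaFₗ hσ ε c)
    exact sub_mem ((hC c.2).2 _ (f x).2) ((hC c.2).1 _ x.2)
  · intro c x
    obtain ⟨t, rfl⟩ : ∃ t : F, t • (⟨a, ha⟩ : A) = x := by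
      have hx : (x : E) ∈ Submodule.span F {a} := hA ▸ x.2
      obtain ⟨t, ht⟩ := Submodule.mem_span_singleton.mp hx
      exact ⟨t, Subtype.ext ht⟩
    have hab : a - b ∈ LinearMap.ker (hq.omegaFₗ hσ ε c) := hC c.2 _ rfl
    show (f (t • ⟨a, ha⟩) : E) - (t • ⟨a, ha⟩ : A) ∈ LinearMap.ker (hq.omegaFₗ hσ ε c)
    rw [map_smul, Submodule.coe_smul, Submodule.coe_smul, hfab, ← smul_sub, ← neg_sub]
    exact Submodule.smul_mem _ t (neg_mem hab)

/-- Let `A,B,C ≤ E` be subspaces of a formed space with `A ∩ C = 0 = B ∩ C`, and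
`f : A → B` a bijective isometry.
(1) If `C ≤ A^⊥ ∩ B^⊥` then `f ⊕ id : A ⊕ C → B ⊕ C`, `a + c ↦ f(a) + c`, is an isometry.
(2) If `A = ⟨a⟩`, `B = ⟨b⟩` with `f(a) = b`, the same holds assuming only `C ≤ (a−b)^⊥`. -/
theorem stmt13 {F E : Type*} [Field F] [AddCommGroup E] [Module F E]
    [FiniteDimensional F E]
    (σ : F →+* F) (hσ : ∀ a : F, σ (σ a) = a)
    (ε : F) (hε : ε * σ ε = 1)
    (Λ : AddSubgroup F)
    (hmin : ∀ a : F, a - ε * σ a ∈ Λ)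
    (hmax : ∀ a ∈ Λ, a + ε * σ a = 0)
    (q : E → E → F) (hq : IsSesq σ q)
    (A B C : Submodule F E) (hAC : A ⊓ C = ⊥) (hBC : B ⊓ C = ⊥)
    (f : A →ₗ[F] B) (hfbij : Function.Bijective f)
    (hfω : ∀ x x' : A, omegaF σ ε q (f x : E) (f x' : E) = omegaF σ ε q (x : E) (x' : E))
    (hfQ : ∀ x : A, q (f x : E) (f x : E) - q (x : E) (x : E) ∈ Λ) :
    (((C : Set E) ⊆ perpSet σ ε q (A : Set E) ∩ perpSet σ ε q (B : Set E)) →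
      ∀ (x x' : A) (c c' : C),
        omegaF σ ε q ((f x : E) + c) ((f x' : E) + c')
          = omegaF σ ε q ((x : E) + c) ((x' : E) + c') ∧
        q ((f x : E) + c) ((f x : E) + c) - q ((x : E) + c) ((x : E) + c) ∈ Λ) ∧
    (∀ (a b : E) (ha : a ∈ A), A = Submodule.span F {a} → B = Submodule.span F {b} →
      (f ⟨a, ha⟩ : E) = b → (C : Set E) ⊆ perpSet σ ε q {a - b} →
      ∀ (x x' : A) (c c' : C),
        omegaF σ ε q ((f x : E) + c) ((f x' : E) + c')
          = omegaF σ ε q ((x : E) + c) ((x' : E) + c') ∧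
        q ((f x : E) + c) ((f x : E) + c) - q ((x : E) + c) ((x : E) + c) ∈ Λ) :=
  stmt13_general σ hσ ε hε Λ hmin q hq A B C f hfω hfQ
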